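/- (Flatness invariance) Let Γ = (π₁,…,πₙ) be a path of activation patterns in {0,1}^N with r₂(Γ) > 0. Then χ(Γ) = 0 if and only if χ(−Γ) = 0, where −Γ = (πₙ,…,π₁) is the reversed path. -/

import Mathlib

/-!
`χ(Γ) = 0` means `r₁(Γ) = r₂(Γ)`. By the triangle inequality the distance from `π₁` to any `πᵢ`
is at most the length of the path up to `πᵢ`, so `r₁ ≤ r₂`, with equality exactly when the path
is a geodesic: `d_H(π₁, πₙ) = r₂(Γ)`. Both this condition and `r₂` are invariant under reversal.
-/

/-- `r₁(Γ)`: maximal Hamming distance to the starting pattern along the first `n`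
entries of the path `Γ`. -/
def r1 {N : ℕ} (n : ℕ) (Γ : ℕ → Fin N → Bool) : ℕ :=
  (Finset.range n).sup fun i => hammingDist (Γ 0) (Γ i)

/-- `r₂(Γ)`: total Hamming length of the path `Γ` of length `n`. -/
def r2 {N : ℕ} (n : ℕ) (Γ : ℕ → Fin N → Bool) : ℕ :=
  ∑ i ∈ Finset.range (n - 1), hammingDist (Γ i) (Γ (i + 1))

/-- The space folding measure `χ(Γ) = 1 - r₁(Γ)/r₂(Γ)`. -/
noncomputable def chi {N : ℕ} (n : ℕ) (Γ : ℕ → Fin N → Bool) : ℝ :=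
  1 - (r1 n Γ : ℝ) / (r2 n Γ : ℝ)

open Finset

theorem hammingDist_le_sum_Ico {ι : Type*} {β : ι → Type*} [Fintype ι] [∀ i, DecidableEq (β i)]
    (Γ : ℕ → ∀ i, β i) {i j : ℕ} (hij : i ≤ j) :
    hammingDist (Γ i) (Γ j) ≤ ∑ k ∈ Ico i j, hammingDist (Γ k) (Γ (k + 1)) := by
  induction j, hij using Nat.le_induction with
  | base => simp
  | succ j hij ih =>
    rw [sum_Ico_succ_top hij]
    exact (hammingDist_triangle _ (Γ j) _).trans (Nat.add_le_add_right ih _)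

section Path

variable {N : ℕ} (n : ℕ) (Γ : ℕ → Fin N → Bool)

theorem r2_eq_sum_Ico : r2 n Γ = ∑ k ∈ Ico 0 (n - 1), hammingDist (Γ k) (Γ (k + 1)) := by
  rw [r2, range_eq_Ico]

theorem r1_le_r2 : r1 n Γ ≤ r2 n Γ :=
  Finset.sup_le fun i hi => (hammingDist_le_sum_Ico Γ (Nat.zero_le i)).trans <| by
    rw [r2_eq_sum_Ico]
    exact sum_le_sum_of_subset (Ico_subset_Ico_right (by rw [mem_range] at hi; omega))

theorem r1_eq_r2_iff : r1 n Γ = r2 n Γ ↔ hammingDist (Γ 0) (Γ (n - 1)) = r2 n Γ := by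
  rcases Nat.eq_zero_or_pos n with rfl | hn
  · simp [r1, r2]
  have hlast : n - 1 ∈ range n := mem_range.2 (by omega)
  have hend : hammingDist (Γ 0) (Γ (n - 1)) ≤ r1 n Γ :=
    le_sup (f := fun i => hammingDist (Γ 0) (Γ i)) hlast
  have hle := r1_le_r2 n Γ
  refine ⟨fun h => ?_, fun h => by omega⟩
  -- Split the path at a farthest pattern `Γ i`: the part after it has length `0`.
  obtain ⟨i, hi, hmax⟩ :=
    exists_mem_eq_sup (range n) ⟨_, hlast⟩ fun i => hammingDist (Γ 0) (Γ i)
  have hin : i ≤ n - 1 := by rw [mem_range] at hi; omega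
  have hsplit := sum_Ico_consecutive (fun k => hammingDist (Γ k) (Γ (k + 1))) (Nat.zero_le i) hin
  have hhead := hammingDist_le_sum_Ico Γ (Nat.zero_le i)
  have htail := hammingDist_le_sum_Ico Γ hin
  have htri := hammingDist_triangle_right (Γ 0) (Γ i) (Γ (n - 1))
  rw [r2_eq_sum_Ico] at h hle ⊢
  rw [r1] at h hend
  omega

theorem r2_reverse : r2 n (fun i => Γ (n - 1 - i)) = r2 n Γ := by
  rw [r2, r2, ← sum_range_reflect]
  refine sum_congr rfl fun i hi => ?_
  rw [mem_range] at hi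
  rw [hammingDist_comm, show n - 1 - (n - 1 - 1 - i) = i + 1 by omega,
    show n - 1 - (n - 1 - 1 - i + 1) = i by omega]

theorem chi_eq_zero_iff : chi n Γ = 0 ↔ r2 n Γ ≠ 0 ∧ r1 n Γ = r2 n Γ := by
  by_cases h : r2 n Γ = 0
  · simp [chi, h]
  rw [chi, sub_eq_zero, eq_comm, div_eq_one_iff_eq (by exact_mod_cast h)]
  exact_mod_cast (and_iff_right h).symm

end Path

theorem flatness_invariance_general {N : ℕ} (n : ℕ) (Γ : ℕ → Fin N → Bool) :
    chi n Γ = 0 ↔ chi n (fun i => Γ (n - 1 - i)) = 0 := by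
  rw [chi_eq_zero_iff, chi_eq_zero_iff, r1_eq_r2_iff, r1_eq_r2_iff, r2_reverse]
  simp only [Nat.sub_zero, Nat.sub_self, hammingDist_comm]

/-- Flatness invariance: for a path with `r₂(Γ) > 0`,
`χ(Γ) = 0` if and only if `χ(−Γ) = 0`, where `−Γ` is the reversed path. -/
theorem flatness_invariance {N : ℕ} (n : ℕ) (Γ : ℕ → Fin N → Bool)
    (h2 : 0 < r2 n Γ) :
    chi n Γ = 0 ↔ chi n (fun i => Γ (n - 1 - i)) = 0 :=
  flatness_invariance_general n Γ
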